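/- For every real t ≥ 0 and every integer n ≥ 1, lim_{k→∞} μ_{t/k²}(nk) = Σ_{m=0}^∞ (−n²t)^m/(m!·(m+1)!), i.e. lim_{k→∞} (e^{−nt/(2k)}/(nk)) · Σ_{j=0}^{nk−1} ((−nt/k)^j/j!) · C(nk, j+1) = J_1(2n√t), where the series on the right converges absolutely. (Consequently, the values of the planar master field at high iterates of small simple loops converge to the values of the master field on the sphere in the weak regime.) -/

import Mathlib

open Filter

/-- The Bessel function of the first kind
`J₁(x) = Σ_{m=0}^∞ ((-1)^m/(m!·(m+1)!)) (x/2)^{2m}`. -/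
noncomputable def besselJ1 (x : ℝ) : ℝ :=
  ∑' m : ℕ, ((-1) ^ m / ((Nat.factorial m : ℝ) * (Nat.factorial (m + 1) : ℝ))) *
    (x / 2) ^ (2 * m)

/-- The planar master field evaluated at the `m`-th iterate of a simple loop of area `s`:
`μ_s(m) = (e^{-ms/2}/m) Σ_{j=0}^{m-1} ((-ms)^j/j!) C(m, j+1)`. -/
noncomputable def planarMasterField (s : ℝ) (m : ℕ) : ℝ :=
  Real.exp (-(m : ℝ) * s / 2) / (m : ℝ) *
    ∑ j ∈ Finset.range m, ((-((m : ℝ) * s)) ^ j / (Nat.factorial j : ℝ)) *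
      (m.choose (j + 1) : ℝ)


open Finset in
/-- Auxiliary: the `j`-th term of the planar master field sum divided by `n*k`,
extended by zero. -/
private noncomputable def mfAux (t : ℝ) (n k j : ℕ) : ℝ :=
  if j + 1 ≤ n * k then
    ((-(((n * k : ℕ) : ℝ) * (t / (k : ℝ) ^ 2))) ^ j / (Nat.factorial j : ℝ)) *
      (((n * k).choose (j + 1) : ℝ)) / (((n * k : ℕ) : ℝ))
  else 0

open Finset in
private lemma mfAux_eq (t : ℝ) {n k j : ℕ} (hk : 1 ≤ k) (hj : j + 1 ≤ n * k) :
    mfAux t n k j = (-1) ^ j *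
      (∏ i ∈ range j, ((n : ℝ) * t / (k : ℝ) * ((n * k - 1 - i : ℕ) : ℝ))) /
      ((Nat.factorial j : ℝ) * (Nat.factorial (j + 1) : ℝ)) := by
  have hM : 1 ≤ n * k := le_trans (Nat.le_add_left 1 j) hj
  have hk0 : (k : ℝ) ≠ 0 := Nat.cast_ne_zero.mpr (by omega)
  have hM0 : ((n * k : ℕ) : ℝ) ≠ 0 := Nat.cast_ne_zero.mpr (by omega)
  -- combinatorial identity
  have hD : (Nat.factorial (j + 1)) * (n * k).choose (j + 1)
      = (n * k) * (n * k - 1).descFactorial j := by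
    rw [← Nat.descFactorial_eq_factorial_mul_choose]
    have h1 : n * k - 1 + 1 = n * k := by omega
    have := Nat.succ_descFactorial_succ (n * k - 1) j
    rw [h1] at this
    exact this
  have hDR : (Nat.factorial (j + 1) : ℝ) * ((n * k).choose (j + 1) : ℝ)
      = ((n * k : ℕ) : ℝ) * (((n * k - 1).descFactorial j : ℕ) : ℝ) := by
    exact_mod_cast congrArg (Nat.cast : ℕ → ℝ) hD
  have hprod : (((n * k - 1).descFactorial j : ℕ) : ℝ)
      = ∏ i ∈ range j, ((n * k - 1 - i : ℕ) : ℝ) := by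
    rw [Nat.descFactorial_eq_prod_range]
    push_cast
    rfl
  have hMs : ((n * k : ℕ) : ℝ) * (t / (k : ℝ) ^ 2) = (n : ℝ) * t / (k : ℝ) := by
    push_cast
    field_simp
  rw [mfAux, if_pos hj, hMs]
  have hCR : ((n * k).choose (j + 1) : ℝ)
      = ((n * k : ℕ) : ℝ) * (∏ i ∈ range j, ((n * k - 1 - i : ℕ) : ℝ))
        / (Nat.factorial (j + 1) : ℝ) := by
    rw [← hprod, eq_div_iff (by positivity)]
    linarith [hDR]
  rw [hCR]
  rw [neg_pow, Finset.prod_mul_distrib, Finset.prod_const, Finset.card_range]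
  have hn0 : (n : ℝ) ≠ 0 := by
    rcases Nat.eq_zero_or_pos n with rfl | h
    · simp at hM
    · exact Nat.cast_ne_zero.mpr (by omega)
  have hf1 : (Nat.factorial j : ℝ) ≠ 0 := by positivity
  have hf2 : (Nat.factorial (j + 1) : ℝ) ≠ 0 := by positivity
  field_simp

open Finset in
private lemma mfAux_bound (t : ℝ) (ht : 0 ≤ t) (n k j : ℕ) :
    |mfAux t n k j| ≤ ((n : ℝ) ^ 2 * t) ^ j /
      ((Nat.factorial j : ℝ) * (Nat.factorial (j + 1) : ℝ)) := by
  by_cases hj : j + 1 ≤ n * k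
  · have hk : 1 ≤ k := by
      rcases Nat.eq_zero_or_pos k with rfl | h
      · simp at hj
      · exact h
    have hk0 : (0 : ℝ) < (k : ℝ) := by exact_mod_cast hk
    rw [mfAux_eq t hk hj]
    rw [abs_div, abs_mul, abs_pow, abs_neg, abs_one, one_pow, one_mul,
      abs_of_pos (show (0 : ℝ) < (Nat.factorial j : ℝ) * (Nat.factorial (j + 1) : ℝ)
        by positivity)]
    have hfac : ∀ i ∈ range j,
        (0 : ℝ) ≤ (n : ℝ) * t / (k : ℝ) * ((n * k - 1 - i : ℕ) : ℝ) ∧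
        (n : ℝ) * t / (k : ℝ) * ((n * k - 1 - i : ℕ) : ℝ) ≤ (n : ℝ) ^ 2 * t := by
      intro i _
      constructor
      · positivity
      · have h1 : ((n * k - 1 - i : ℕ) : ℝ) ≤ ((n * k : ℕ) : ℝ) := by
          exact_mod_cast Nat.sub_le _ _ |>.trans (Nat.sub_le _ _)
        have h2 : (n : ℝ) * t / (k : ℝ) * ((n * k : ℕ) : ℝ) = (n : ℝ) ^ 2 * t := by
          push_cast
          field_simp
        calc (n : ℝ) * t / (k : ℝ) * ((n * k - 1 - i : ℕ) : ℝ)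
            ≤ (n : ℝ) * t / (k : ℝ) * ((n * k : ℕ) : ℝ) := by
              apply mul_le_mul_of_nonneg_left h1 (by positivity)
          _ = (n : ℝ) ^ 2 * t := h2
    have hprod : |∏ i ∈ range j, ((n : ℝ) * t / (k : ℝ) * ((n * k - 1 - i : ℕ) : ℝ))|
        ≤ ((n : ℝ) ^ 2 * t) ^ j := by
      rw [abs_of_nonneg (Finset.prod_nonneg fun i hi => (hfac i hi).1)]
      calc ∏ i ∈ range j, ((n : ℝ) * t / (k : ℝ) * ((n * k - 1 - i : ℕ) : ℝ))
          ≤ ∏ _i ∈ range j, ((n : ℝ) ^ 2 * t) :=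
            Finset.prod_le_prod (fun i hi => (hfac i hi).1) (fun i hi => (hfac i hi).2)
        _ = ((n : ℝ) ^ 2 * t) ^ j := by rw [Finset.prod_const, Finset.card_range]
    exact (div_le_div_iff_of_pos_right (by positivity)).mpr hprod
  · rw [mfAux, if_neg hj]
    simp only [abs_zero]
    positivity


open Finset in
private lemma mfAux_tendsto (t : ℝ) {n : ℕ} (hn : 1 ≤ n) (j : ℕ) :
    Tendsto (fun k : ℕ => mfAux t n k j) atTop
      (nhds ((-((n : ℝ) ^ 2 * t)) ^ j /
        ((Nat.factorial j : ℝ) * (Nat.factorial (j + 1) : ℝ)))) := by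
  -- each factor tends to n^2 t
  have hfac : ∀ i : ℕ, Tendsto (fun k : ℕ =>
      (n : ℝ) * t / (k : ℝ) * ((n * k - 1 - i : ℕ) : ℝ)) atTop
      (nhds ((n : ℝ) ^ 2 * t)) := by
    intro i
    have h1 : Tendsto (fun k : ℕ => (n : ℝ) ^ 2 * t - (n : ℝ) * t * (1 + i) / (k : ℝ))
        atTop (nhds ((n : ℝ) ^ 2 * t - 0)) :=
      tendsto_const_nhds.sub
        (Tendsto.div_atTop tendsto_const_nhds tendsto_natCast_atTop_atTop)
    rw [sub_zero] at h1
    apply h1.congr'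
    filter_upwards [eventually_ge_atTop (i + 2)] with k hk
    have hle : 1 + i ≤ n * k := by
      have : k ≤ n * k := Nat.le_mul_of_pos_left k hn
      omega
    have hcast : ((n * k - 1 - i : ℕ) : ℝ) = ((n * k : ℕ) : ℝ) - (1 + i) := by
      have h2 : n * k - 1 - i = n * k - (1 + i) := by omega
      rw [h2, Nat.cast_sub hle]
      push_cast
      ring
    have hk0 : (k : ℝ) ≠ 0 := Nat.cast_ne_zero.mpr (by omega)
    rw [hcast]
    push_cast
    field_simp
  have hprod : Tendsto (fun k : ℕ =>
      ∏ i ∈ range j, ((n : ℝ) * t / (k : ℝ) * ((n * k - 1 - i : ℕ) : ℝ))) atTop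
      (nhds (∏ _i ∈ range j, (n : ℝ) ^ 2 * t)) :=
    tendsto_finset_prod _ fun i _ => hfac i
  have hlim : (-((n : ℝ) ^ 2 * t)) ^ j /
      ((Nat.factorial j : ℝ) * (Nat.factorial (j + 1) : ℝ))
      = (-1) ^ j * (∏ _i ∈ range j, (n : ℝ) ^ 2 * t) /
        ((Nat.factorial j : ℝ) * (Nat.factorial (j + 1) : ℝ)) := by
    rw [Finset.prod_const, Finset.card_range, neg_pow]
  rw [hlim]
  apply Tendsto.congr' _ (((hprod.const_mul ((-1 : ℝ) ^ j)).div_const _))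
  filter_upwards [eventually_ge_atTop (j + 2)] with k hk
  have hj : j + 1 ≤ n * k := by
    have : k ≤ n * k := Nat.le_mul_of_pos_left k hn
    omega
  exact (mfAux_eq t (by omega) hj).symm


open Finset in
/-- For every `t ≥ 0` and integer `n ≥ 1`,
`lim_{k→∞} μ_{t/k²}(nk) = Σ_{m=0}^∞ (-n²t)^m/(m!(m+1)!) = J₁(2n√t)`,
where the series converges absolutely: the values of the planar master field at high
iterates of small simple loops converge to the master field on the sphere (weak regime). -/
theorem planar_master_field_iterates_limit (t : ℝ) (ht : 0 ≤ t) (n : ℕ) (hn : 1 ≤ n) :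
    Summable (fun m : ℕ =>
      |(-((n : ℝ) ^ 2 * t)) ^ m / ((Nat.factorial m : ℝ) * (Nat.factorial (m + 1) : ℝ))|) ∧
    Tendsto (fun k : ℕ => planarMasterField (t / (k : ℝ) ^ 2) (n * k)) atTop
      (nhds (∑' m : ℕ,
        (-((n : ℝ) ^ 2 * t)) ^ m / ((Nat.factorial m : ℝ) * (Nat.factorial (m + 1) : ℝ)))) ∧
    (∑' m : ℕ,
        (-((n : ℝ) ^ 2 * t)) ^ m / ((Nat.factorial m : ℝ) * (Nat.factorial (m + 1) : ℝ)))
      = besselJ1 (2 * (n : ℝ) * Real.sqrt t) := by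
  have hT0 : (0 : ℝ) ≤ (n : ℝ) ^ 2 * t := by positivity
  -- summability of the bound
  have hb : Summable (fun j : ℕ => ((n : ℝ) ^ 2 * t) ^ j /
      ((Nat.factorial j : ℝ) * (Nat.factorial (j + 1) : ℝ))) := by
    apply Summable.of_nonneg_of_le (fun j => by positivity) _
      (Real.summable_pow_div_factorial ((n : ℝ) ^ 2 * t))
    intro j
    gcongr
    exact le_mul_of_one_le_right (by positivity)
      (Nat.one_le_cast.mpr (Nat.factorial_pos (j + 1)))
  have habs : ∀ m : ℕ,
      |(-((n : ℝ) ^ 2 * t)) ^ m / ((Nat.factorial m : ℝ) * (Nat.factorial (m + 1) : ℝ))|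
      = ((n : ℝ) ^ 2 * t) ^ m / ((Nat.factorial m : ℝ) * (Nat.factorial (m + 1) : ℝ)) := by
    intro m
    rw [abs_div, abs_pow, abs_neg, abs_of_nonneg hT0,
      abs_of_pos (show (0 : ℝ) < (Nat.factorial m : ℝ) * (Nat.factorial (m + 1) : ℝ)
        by positivity)]
  refine ⟨by simpa only [habs] using hb, ?_, ?_⟩
  · -- the limit
    have htsum : Tendsto (fun k : ℕ => ∑' j, mfAux t n k j) atTop
        (nhds (∑' j : ℕ, (-((n : ℝ) ^ 2 * t)) ^ j /
          ((Nat.factorial j : ℝ) * (Nat.factorial (j + 1) : ℝ)))) := by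
      apply tendsto_tsum_of_dominated_convergence hb (fun j => mfAux_tendsto t hn j)
      filter_upwards with k j
      rw [Real.norm_eq_abs]
      exact mfAux_bound t ht n k j
    have hexp : Tendsto (fun k : ℕ =>
        Real.exp (-((n * k : ℕ) : ℝ) * (t / (k : ℝ) ^ 2) / 2)) atTop (nhds 1) := by
      have h1 : Tendsto (fun k : ℕ => -((n : ℝ) * t) / (2 * (k : ℝ))) atTop (nhds 0) :=
        Tendsto.div_atTop tendsto_const_nhds
          (Tendsto.const_mul_atTop (by norm_num) tendsto_natCast_atTop_atTop)
      have h2 := (Real.continuous_exp.tendsto 0).comp h1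
      rw [Real.exp_zero] at h2
      apply h2.congr'
      filter_upwards [eventually_ge_atTop 1] with k hk
      have hk0 : (k : ℝ) ≠ 0 := Nat.cast_ne_zero.mpr (by omega)
      simp only [Function.comp]
      congr 1
      push_cast
      field_simp
    have hmul := hexp.mul htsum
    rw [one_mul] at hmul
    apply hmul.congr'
    filter_upwards [eventually_ge_atTop 1] with k hk
    have hM0 : ((n * k : ℕ) : ℝ) ≠ 0 := by
      have h : 0 < n * k := Nat.mul_pos hn hk
      exact Nat.cast_ne_zero.mpr (by omega)
    have h0 : ∑' j, mfAux t n k j = ∑ j ∈ range (n * k), mfAux t n k j := by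
      apply tsum_eq_sum
      intro j hj
      rw [mfAux, if_neg]
      rw [Finset.mem_range] at hj
      omega
    have h1 : ∑ j ∈ range (n * k), mfAux t n k j
        = (∑ j ∈ range (n * k), ((-(((n * k : ℕ) : ℝ) * (t / (k : ℝ) ^ 2))) ^ j /
            (Nat.factorial j : ℝ)) * (((n * k).choose (j + 1) : ℝ))) / ((n * k : ℕ) : ℝ) := by
      rw [Finset.sum_div]
      apply Finset.sum_congr rfl
      intro j hj
      rw [Finset.mem_range] at hj
      rw [mfAux, if_pos (by omega)]
    rw [h0, h1, planarMasterField]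
    ring
  · -- Bessel identity
    unfold besselJ1
    apply tsum_congr
    intro m
    have h1 : 2 * (n : ℝ) * Real.sqrt t / 2 = (n : ℝ) * Real.sqrt t := by ring
    rw [h1, pow_mul]
    have h2 : ((n : ℝ) * Real.sqrt t) ^ 2 = (n : ℝ) ^ 2 * t := by
      rw [mul_pow, Real.sq_sqrt ht]
    rw [h2, neg_pow]
    ring
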